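/- arXiv:2308.03265 — 5 statements merged into one kernel-verified Lean document; each statement's English description precedes it below -/
import Mathlib

section
/- The discriminant of the polynomial x^7 - x^6 - 2x^5 + 6x^4 - 11x^3 + 6x^2 + 3x - 1 is -7215127, and -7215127 is (up to sign) a prime number. -/
/-! The discriminant `∏_{i<j} (rᵢ - rⱼ)²` is `det (Vᵀ V)` for the Vandermonde matrix `V` of the
roots, and `Vᵀ V` is the Hankel matrix `(s_{i+j})` of the power sums `s_k = ∑ rᵢ ^ k`. Vieta's
formulas give the elementary symmetric functions of the roots from the coefficients, Newton's
identities then give `s_0, …, s_12`, and the resulting integer `7 × 7` determinant is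
`-7215127`. -/

open Polynomial Finset

variable {σ R : Type*} [Fintype σ] [CommRing R]

theorem newton_sum_pow_succ (r : σ → R) (k : ℕ) :
    ∑ i, r i ^ (k + 1) = (-1) ^ k * (k + 1) * (univ.val.map r).esymm (k + 1) +
      ∑ j ∈ range k, (-1) ^ j * (univ.val.map r).esymm (j + 1) * ∑ i, r i ^ (k - j) := by
  have h := congrArg (MvPolynomial.aeval r)
    (MvPolynomial.psum_eq_mul_esymm_sub_sum σ ℤ (k + 1) k.succ_pos)
  simp only [MvPolynomial.psum, map_sum, map_pow, MvPolynomial.aeval_X, map_sub, map_mul,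
    MvPolynomial.aeval_esymm_eq_multiset_esymm, map_neg, map_one, map_natCast] at h
  rw [h, sum_filter, Nat.sum_antidiagonal_eq_sum_range_succ_mk, sum_range_succ', sum_range_succ]
  simp only [Set.mem_Ioo, lt_self_iff_false, and_false, false_and, if_false, add_zero,
    add_lt_add_iff_right, Nat.add_sub_add_right, Nat.zero_lt_succ, true_and]
  rw [sum_congr rfl fun j hj => if_pos (mem_range.mp hj), sub_eq_add_neg, ← sum_neg_distrib]
  push_cast
  congr 1
  · ring
  · exact sum_congr rfl fun j _ => by ring

theorem esymm_map_eq_coeff_prod (r : σ → R) {j : ℕ} (hj : j ≤ Fintype.card σ) :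
    (univ.val.map r).esymm j = (-1) ^ j * (∏ i, (X - C (r i))).coeff (Fintype.card σ - j) := by
  have h := Multiset.prod_X_sub_C_coeff (univ.val.map r) (k := Fintype.card σ - j) (by simp)
  simp only [Multiset.map_map, Function.comp_def, Multiset.card_map, card_val, card_univ,
    Nat.sub_sub_self hj] at h
  rw [prod_eq_multiset_prod, h, ← mul_assoc, ← pow_add, ← two_mul, pow_mul]
  simp

theorem Multiset.esymm_eq_zero_of_card_lt (s : Multiset R) {j : ℕ} (hj : card s < j) :
    s.esymm j = 0 := by
  rw [Multiset.esymm, Multiset.powersetCard_eq_empty _ hj, Multiset.map_zero, Multiset.sum_zero]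

theorem prod_sub_sq_eq_det_hankel {n : ℕ} (v : Fin n → R) :
    ∏ i, ∏ j ∈ univ.filter (i < ·), (v i - v j) ^ 2 =
      (Matrix.of fun i j : Fin n => ∑ k, v k ^ (i + j : ℕ)).det := by
  have hankel : Matrix.of (fun i j : Fin n => ∑ k, v k ^ (i + j : ℕ)) =
      (Matrix.vandermonde v).transpose * Matrix.vandermonde v := by
    ext i j
    rw [Matrix.vandermonde_transpose_mul_vandermonde]
    rfl
  rw [hankel, Matrix.det_mul, Matrix.det_transpose, ← sq, Matrix.det_vandermonde, ← prod_pow]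
  refine prod_congr rfl fun i _ => ?_
  rw [filter_lt_eq_Ioi, ← prod_pow]
  exact prod_congr rfl fun j _ => by ring

variable (R) in
noncomputable def septic : R[X] :=
  X ^ 7 - X ^ 6 - 2 * X ^ 5 + 6 * X ^ 4 - 11 * X ^ 3 + 6 * X ^ 2 + 3 * X - 1

-- The default value `0` is the correct `e_j` for `j > 7`.
def septicEsymm (j : ℕ) : ℤ := [1, 1, -2, -6, -11, -6, 3, 1].getD j 0

def septicPowerSum (k : ℕ) : ℤ :=
  [7, 1, 5, -11, 37, -34, 137, -300, 637, -1343, 3320, -7171, 15889].getD k 0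

theorem esymm_eq_septicEsymm {r : Fin 7 → R} (hr : septic R = ∏ i, (X - C (r i))) (j : ℕ) :
    (univ.val.map r).esymm j = septicEsymm j := by
  rcases le_or_gt j 7 with hj | hj
  · rw [esymm_map_eq_coeff_prod r (by simpa using hj), ← hr, Fintype.card_fin]
    interval_cases j <;> simp [septic, coeff_X, coeff_one, septicEsymm] <;> norm_num
  · rw [Multiset.esymm_eq_zero_of_card_lt _ (by simpa using hj), septicEsymm,
      List.getD_eq_default _ _ (by simp; omega)]
    simp

theorem sum_pow_eq_septicPowerSum {r : Fin 7 → R} (hr : septic R = ∏ i, (X - C (r i))) :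
    ∀ k < 13, ∑ i, r i ^ k = septicPowerSum k := by
  intro k
  induction k using Nat.strong_induction_on with
  | _ k ih =>
  intro hk
  rcases k with _ | k
  · simp [septicPowerSum]
  rw [newton_sum_pow_succ]
  simp only [esymm_eq_septicEsymm hr]
  have hk : k < 12 := by omega
  interval_cases k <;>
    simp (disch := omega) only [sum_range_succ, sum_range_zero, Nat.reduceSub, Nat.sub_zero, ih] <;>
    norm_num [septicEsymm, septicPowerSum]

set_option maxHeartbeats 1000000 in
theorem det_hankel_septicPowerSum :
    (Matrix.of fun i j : Fin 7 => septicPowerSum (i + j)).det = -7215127 := by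
  have hankel : Matrix.of (fun i j : Fin 7 => septicPowerSum (i + j)) =
      !![7, 1, 5, -11, 37, -34, 137; 1, 5, -11, 37, -34, 137, -300;
        5, -11, 37, -34, 137, -300, 637; -11, 37, -34, 137, -300, 637, -1343;
        37, -34, 137, -300, 637, -1343, 3320; -34, 137, -300, 637, -1343, 3320, -7171;
        137, -300, 637, -1343, 3320, -7171, 15889] := by
    ext i j
    fin_cases i <;> fin_cases j <;> rfl
  rw [hankel]
  simp [Matrix.det_succ_row_zero, Fin.sum_univ_succ, Fin.succAbove]

theorem prod_sub_sq_eq_of_septic_eq_prod {r : Fin 7 → R} (hr : septic R = ∏ i, (X - C (r i))) :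
    ∏ i, ∏ j ∈ univ.filter (i < ·), (r i - r j) ^ 2 = -7215127 := by
  have hankel : Matrix.of (fun i j : Fin 7 => ∑ k, r k ^ (i + j : ℕ)) =
      (Matrix.of fun i j : Fin 7 => septicPowerSum (i + j)).map (↑) := by
    ext i j
    exact sum_pow_eq_septicPowerSum hr _ (by omega)
  rw [prod_sub_sq_eq_det_hankel, hankel, ← Int.cast_det, det_hankel_septicPowerSum]
  simp

/-- The discriminant of `p(x) = x^7 - x^6 - 2x^5 + 6x^4 - 11x^3 + 6x^2 + 3x - 1` is `-7215127`,
which is (up to sign) a prime number.  Since `p` is monic of degree `7`, its discriminant is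
`∏_{i<j} (r_i - r_j)^2` where `r_1, …, r_7` are its complex roots. -/
theorem stmt_2 (r : Fin 7 → ℂ)
    (hr : (X ^ 7 - X ^ 6 - 2 * X ^ 5 + 6 * X ^ 4 - 11 * X ^ 3 + 6 * X ^ 2 + 3 * X - 1 :
        Polynomial ℂ) = ∏ i : Fin 7, (X - C (r i))) :
    (∏ i : Fin 7, ∏ j ∈ Finset.univ.filter (fun j => i < j), (r i - r j) ^ 2) = -7215127 ∧
      Nat.Prime 7215127 :=
  ⟨prod_sub_sq_eq_of_septic_eq_prod hr, by norm_num⟩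
end

section
/- As formal power series in q (with coefficients in Q), the identity -q^{-1/8} Σ_{j,l=0}^{∞} ( q^{2(j+l+3/4)^2} - q^{2(j+l+7/4)^2} - q^{2(j+l+1/4)^2} + q^{2(j+l+5/4)^2} ) = Σ_{j=0}^{∞} (-1)^j q^{j(j+1)/2} holds. -/
/-!
Put `T m = m (m + 1) / 2` and `a m = (-1)^m q^{T m}` (this is `altTriangular q m`).
Completing the square, `2 (n + k/4)^2 - 1/8` equals `T (2n)`, `T (2n + 1)`, `T (2n + 2)`,
`T (2n + 3)` for `k = 1, 3, 5, 7`, so the summand of the left-hand side at `(j, l)` is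
`b (j + l) - b (j + l + 1)` with `b n = a (2n) + a (2n + 1)`. The sum over `l` telescopes to
`b j`, and summing the pairs `b j` gives back `Σ a`. Everything converges absolutely since
`|a m| ≤ q^m`.
-/

theorem tsum_sub_succ_of_summable {G : Type*} [AddCommGroup G] [TopologicalSpace G]
    [IsTopologicalAddGroup G] [T2Space G] {b : ℕ → G} (hb : Summable b) :
    ∑' n, (b n - b (n + 1)) = b 0 := by
  rw [hb.tsum_sub ((summable_nat_add_iff 1).2 hb), hb.tsum_eq_zero_add, add_sub_cancel_right]

section Telescoping

variable {E : Type*} [NormedAddCommGroup E] [CompleteSpace E]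

theorem summable_prod_add_of_norm_le_geometric {g : ℕ → E} {C r : ℝ} (hr0 : 0 ≤ r)
    (hr1 : r < 1) (hg : ∀ n, ‖g n‖ ≤ C * r ^ n) : Summable fun p : ℕ × ℕ => g (p.1 + p.2) := by
  have hgeo := summable_geometric_of_lt_one hr0 hr1
  refine .of_norm_bounded
    ((hgeo.mul_of_nonneg hgeo (fun n => pow_nonneg hr0 n) (fun n => pow_nonneg hr0 n)).mul_left C)
    fun p => ?_
  simpa only [pow_add, mul_assoc] using hg (p.1 + p.2)

theorem tsum_prod_sub_succ_eq_tsum {b : ℕ → E} {C r : ℝ} (hr0 : 0 ≤ r) (hr1 : r < 1)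
    (hb : ∀ n, ‖b n‖ ≤ C * r ^ n) :
    ∑' p : ℕ × ℕ, (b (p.1 + p.2) - b (p.1 + p.2 + 1)) = ∑' n, b n := by
  have hsum : Summable b := .of_norm_bounded ((summable_geometric_of_lt_one hr0 hr1).mul_left C) hb
  have hshift (j : ℕ) : Summable fun l => b (j + l) := by
    simpa only [add_comm j] using (summable_nat_add_iff j).2 hsum
  have hC : 0 ≤ C := by simpa using (norm_nonneg _).trans (hb 0)
  have hdiff (n : ℕ) : ‖b n - b (n + 1)‖ ≤ (2 * C) * r ^ n :=
    calc ‖b n - b (n + 1)‖ ≤ C * r ^ n + C * r ^ (n + 1) := (norm_sub_le _ _).trans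
          (add_le_add (hb n) (hb (n + 1)))
      _ ≤ (2 * C) * r ^ n := by
          have := mul_le_mul_of_nonneg_left
            (pow_le_pow_of_le_one hr0 hr1.le (Nat.le_add_right n 1)) hC
          linarith
  rw [(summable_prod_add_of_norm_le_geometric hr0 hr1 hdiff).tsum_prod'
    fun j => (hshift j).sub ((summable_nat_add_iff 1).2 (hshift j))]
  refine tsum_congr fun j => ?_
  simpa only [add_assoc, add_zero] using tsum_sub_succ_of_summable (hshift j)

theorem tsum_add_pairs {f : ℕ → E} (hf : Summable f) :
    ∑' k, (f (2 * k) + f (2 * k + 1)) = ∑' k, f k := by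
  have heven := hf.comp_injective (mul_right_injective₀ (two_ne_zero' ℕ))
  have hodd :=
    hf.comp_injective ((add_left_injective 1).comp (mul_right_injective₀ (two_ne_zero' ℕ)))
  exact (heven.tsum_add hodd).trans (tsum_even_add_odd heven hodd)

end Telescoping

noncomputable def altTriangular (q : ℝ) (m : ℕ) : ℝ := (-1) ^ m * q ^ (m * (m + 1) / 2)

variable {q : ℝ}

theorem altTriangular_two_mul (n : ℕ) : altTriangular q (2 * n) = q ^ (n * (2 * n + 1)) := by
  rw [altTriangular, pow_mul, neg_one_sq, one_pow, one_mul,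
    show 2 * n * (2 * n + 1) = 2 * (n * (2 * n + 1)) by ring, Nat.mul_div_cancel_left _ two_pos]

theorem altTriangular_two_mul_add_one (n : ℕ) :
    altTriangular q (2 * n + 1) = -q ^ ((n + 1) * (2 * n + 1)) := by
  rw [altTriangular, pow_succ, pow_mul, neg_one_sq, one_pow, one_mul, neg_one_mul,
    show (2 * n + 1) * (2 * n + 1 + 1) = 2 * ((n + 1) * (2 * n + 1)) by ring,
    Nat.mul_div_cancel_left _ two_pos]

theorem norm_altTriangular_le (hq0 : 0 ≤ q) (hq1 : q ≤ 1) (m : ℕ) :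
    ‖altTriangular q m‖ ≤ q ^ m := by
  have hm : m ≤ m * (m + 1) / 2 := by
    rcases m with _ | m
    · rfl
    · exact (Nat.le_div_iff_mul_le two_pos).2 (by nlinarith)
  rw [altTriangular, norm_mul, norm_pow, norm_neg, norm_one, one_pow, one_mul, norm_pow,
    Real.norm_of_nonneg hq0]
  exact pow_le_pow_of_le_one hq0 hq1 hm

theorem norm_altTriangular_pair_le (hq0 : 0 ≤ q) (hq1 : q ≤ 1) (n : ℕ) :
    ‖altTriangular q (2 * n) + altTriangular q (2 * n + 1)‖ ≤ 2 * q ^ n := by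
  have h1 := (norm_altTriangular_le hq0 hq1 (2 * n)).trans
    (pow_le_pow_of_le_one hq0 hq1 (show n ≤ 2 * n by omega))
  have h2 := (norm_altTriangular_le hq0 hq1 (2 * n + 1)).trans
    (pow_le_pow_of_le_one hq0 hq1 (show n ≤ 2 * n + 1 by omega))
  linarith [norm_add_le (altTriangular q (2 * n)) (altTriangular q (2 * n + 1))]

theorem rpow_neg_one_eighth_mul_rpow (hq : 0 < q) {x : ℝ} {N : ℕ} (hx : x = N + 1 / 8) :
    q ^ (-(1 / 8) : ℝ) * q ^ x = q ^ N := by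
  rw [hx, ← Real.rpow_add hq, neg_add_cancel_comm_assoc, Real.rpow_natCast]

theorem neg_rpow_mul_summand_eq (hq : 0 < q) (n : ℕ) :
    -q ^ (-(1 / 8) : ℝ) *
        (q ^ (2 * ((n : ℝ) + 3 / 4) ^ 2) - q ^ (2 * ((n : ℝ) + 7 / 4) ^ 2)
          - q ^ (2 * ((n : ℝ) + 1 / 4) ^ 2) + q ^ (2 * ((n : ℝ) + 5 / 4) ^ 2))
      = (altTriangular q (2 * n) + altTriangular q (2 * n + 1))
        - (altTriangular q (2 * (n + 1)) + altTriangular q (2 * (n + 1) + 1)) := by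
  have h1 := rpow_neg_one_eighth_mul_rpow hq (x := 2 * ((n : ℝ) + 1 / 4) ^ 2)
    (N := n * (2 * n + 1)) (by push_cast; ring)
  have h3 := rpow_neg_one_eighth_mul_rpow hq (x := 2 * ((n : ℝ) + 3 / 4) ^ 2)
    (N := (n + 1) * (2 * n + 1)) (by push_cast; ring)
  have h5 := rpow_neg_one_eighth_mul_rpow hq (x := 2 * ((n : ℝ) + 5 / 4) ^ 2)
    (N := (n + 1) * (2 * (n + 1) + 1)) (by push_cast; ring)
  have h7 := rpow_neg_one_eighth_mul_rpow hq (x := 2 * ((n : ℝ) + 7 / 4) ^ 2)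
    (N := (n + 1 + 1) * (2 * (n + 1) + 1)) (by push_cast; ring)
  rw [neg_mul, mul_add, mul_sub, mul_sub, h1, h3, h5, h7, altTriangular_two_mul,
    altTriangular_two_mul, altTriangular_two_mul_add_one, altTriangular_two_mul_add_one]
  ring

/-- The identity
`-q^{-1/8} Σ_{j,l≥0} (q^{2(j+l+3/4)^2} - q^{2(j+l+7/4)^2} - q^{2(j+l+1/4)^2} + q^{2(j+l+5/4)^2})
  = Σ_{j≥0} (-1)^j q^{j(j+1)/2}`,
stated for real `0 < q < 1` (using real powers `rpow` for the fractional exponents), which is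
equivalent to the corresponding formal power series identity. -/
theorem stmt_8 (q : ℝ) (h0 : 0 < q) (h1 : q < 1) :
    -q ^ (-(1 / 8) : ℝ) *
        ∑' p : ℕ × ℕ,
          (q ^ (2 * ((p.1 + p.2 : ℝ) + 3 / 4) ^ 2) - q ^ (2 * ((p.1 + p.2 : ℝ) + 7 / 4) ^ 2)
            - q ^ (2 * ((p.1 + p.2 : ℝ) + 1 / 4) ^ 2) + q ^ (2 * ((p.1 + p.2 : ℝ) + 5 / 4) ^ 2))
      = ∑' j : ℕ, (-1) ^ j * q ^ (j * (j + 1) / 2) := by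
  have hsum : Summable (altTriangular q) :=
    .of_norm_bounded (summable_geometric_of_lt_one h0.le h1) (norm_altTriangular_le h0.le h1.le)
  rw [← tsum_mul_left]
  calc _ = ∑' p : ℕ × ℕ,
          ((altTriangular q (2 * (p.1 + p.2)) + altTriangular q (2 * (p.1 + p.2) + 1))
          - (altTriangular q (2 * (p.1 + p.2 + 1)) + altTriangular q (2 * (p.1 + p.2 + 1) + 1))) :=
        tsum_congr fun p => by rw [← Nat.cast_add]; exact neg_rpow_mul_summand_eq h0 _
    _ = ∑' n, (altTriangular q (2 * n) + altTriangular q (2 * n + 1)) :=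
        tsum_prod_sub_succ_eq_tsum h0.le h1 (norm_altTriangular_pair_le h0.le h1.le)
    _ = _ := tsum_add_pairs hsum
end

section
/- Let ξ be a root of p(x) = x^7 - x^6 - 2x^5 + 6x^4 - 11x^3 + 6x^2 + 3x - 1, and set X_1 = -3 + 11ξ + 20ξ^2 - 15ξ^3 + 6ξ^4 - 2ξ^5 - 4ξ^6 and X_2 = -9 + 19ξ + 76ξ^2 - 52ξ^3 + 20ξ^4 - 4ξ^5 - 13ξ^6. Then (1 - X_2)(1 - X_1^{-1} X_2) = X_1 and (1 - X_1^2)^2 = X_1^2 X_2 (1 - X_1^{-1} X_2). -/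
/-!
`X₁` is a unit of `ℤ[ξ]`, with an explicit inverse. Multiplying through by `X₁`, the two identities
become `(1 - X₂)(X₁ - X₂) = X₁²` and `(1 - X₁²)² = X₁ X₂ (X₁ - X₂)`, polynomial identities in `ξ`
modulo `p`; each is certified by the quotient of the difference of its two sides by `p`.
-/

namespace SepticUnit

variable {R : Type*} [CommRing R]

def X₁ (ξ : R) : R := -3 + 11 * ξ + 20 * ξ ^ 2 - 15 * ξ ^ 3 + 6 * ξ ^ 4 - 2 * ξ ^ 5 - 4 * ξ ^ 6

def X₂ (ξ : R) : R := -9 + 19 * ξ + 76 * ξ ^ 2 - 52 * ξ ^ 3 + 20 * ξ ^ 4 - 4 * ξ ^ 5 - 13 * ξ ^ 6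

theorem isUnit_X₁ {ξ : R}
    (hξ : ξ ^ 7 - ξ ^ 6 - 2 * ξ ^ 5 + 6 * ξ ^ 4 - 11 * ξ ^ 3 + 6 * ξ ^ 2 + 3 * ξ - 1 = 0) :
    IsUnit (X₁ ξ) :=
  .of_mul_eq_one (6 - 10 * ξ - 42 * ξ ^ 2 + 28 * ξ ^ 3 - 11 * ξ ^ 4 + 2 * ξ ^ 5 + 7 * ξ ^ 6)
    (by
      unfold X₁
      linear_combination (19 - 39 * ξ - 139 * ξ ^ 2 - 24 * ξ ^ 3 - 50 * ξ ^ 4 - 28 * ξ ^ 5) * hξ)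

theorem one_sub_X₂_mul_X₁_sub_X₂ {ξ : R}
    (hξ : ξ ^ 7 - ξ ^ 6 - 2 * ξ ^ 5 + 6 * ξ ^ 4 - 11 * ξ ^ 3 + 6 * ξ ^ 2 + 3 * ξ - 1 = 0) :
    (1 - X₂ ξ) * (X₁ ξ - X₂ ξ) = X₁ ξ ^ 2 := by
  unfold X₁ X₂
  linear_combination (-51 - 25 * ξ + 484 * ξ ^ 2 + 39 * ξ ^ 3 + 147 * ξ ^ 4 + 101 * ξ ^ 5) * hξ

theorem one_sub_X₁_sq_sq {ξ : R}
    (hξ : ξ ^ 7 - ξ ^ 6 - 2 * ξ ^ 5 + 6 * ξ ^ 4 - 11 * ξ ^ 3 + 6 * ξ ^ 2 + 3 * ξ - 1 = 0) :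
    (1 - X₁ ξ ^ 2) ^ 2 = X₁ ξ * X₂ ξ * (X₁ ξ - X₂ ξ) := by
  unfold X₁ X₂
  linear_combination (98 + 198 * ξ - 4648 * ξ ^ 2 - 1813 * ξ ^ 3 + 30730 * ξ ^ 4 + 39351 * ξ ^ 5
    - 2252 * ξ ^ 6 - 1483 * ξ ^ 7 + 20377 * ξ ^ 8 - 37004 * ξ ^ 9 - 1766 * ξ ^ 10 + 508 * ξ ^ 11
    - 8688 * ξ ^ 12 + 3216 * ξ ^ 13 + 1792 * ξ ^ 14 + 128 * ξ ^ 15 + 768 * ξ ^ 16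
    + 256 * ξ ^ 17) * hξ

end SepticUnit

open SepticUnit in
theorem stmt_13_general {K : Type*} [Field K] (ξ : K)
    (hξ : ξ ^ 7 - ξ ^ 6 - 2 * ξ ^ 5 + 6 * ξ ^ 4 - 11 * ξ ^ 3 + 6 * ξ ^ 2 + 3 * ξ - 1 = 0) :
    let X₁ := -3 + 11 * ξ + 20 * ξ ^ 2 - 15 * ξ ^ 3 + 6 * ξ ^ 4 - 2 * ξ ^ 5 - 4 * ξ ^ 6
    let X₂ := -9 + 19 * ξ + 76 * ξ ^ 2 - 52 * ξ ^ 3 + 20 * ξ ^ 4 - 4 * ξ ^ 5 - 13 * ξ ^ 6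
    (1 - X₂) * (1 - X₁⁻¹ * X₂) = X₁ ∧ (1 - X₁ ^ 2) ^ 2 = X₁ ^ 2 * X₂ * (1 - X₁⁻¹ * X₂) := by
  intro X₁ X₂
  have hX₁ : X₁ ≠ 0 := (isUnit_X₁ hξ).ne_zero
  have h₁ : (1 - X₂) * (X₁ - X₂) = X₁ ^ 2 := one_sub_X₂_mul_X₁_sub_X₂ hξ
  have h₂ : (1 - X₁ ^ 2) ^ 2 = X₁ * X₂ * (X₁ - X₂) := one_sub_X₁_sq_sq hξ
  constructor
  · field_simp
    linear_combination h₁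
  · field_simp
    linear_combination h₂

/-- Let `ξ` be a root of `p(x) = x^7 - x^6 - 2x^5 + 6x^4 - 11x^3 + 6x^2 + 3x - 1` (in a field of
characteristic zero, e.g. the number field `ℚ[x]/(p)`), and set
`X₁ = -3 + 11ξ + 20ξ² - 15ξ³ + 6ξ⁴ - 2ξ⁵ - 4ξ⁶` and
`X₂ = -9 + 19ξ + 76ξ² - 52ξ³ + 20ξ⁴ - 4ξ⁵ - 13ξ⁶`.  Then
`(1 - X₂)(1 - X₁⁻¹X₂) = X₁` and `(1 - X₁²)² = X₁² X₂ (1 - X₁⁻¹X₂)`. -/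
theorem stmt_13 {K : Type*} [Field K] [CharZero K] (ξ : K)
    (hξ : ξ ^ 7 - ξ ^ 6 - 2 * ξ ^ 5 + 6 * ξ ^ 4 - 11 * ξ ^ 3 + 6 * ξ ^ 2 + 3 * ξ - 1 = 0) :
    let X₁ := -3 + 11 * ξ + 20 * ξ ^ 2 - 15 * ξ ^ 3 + 6 * ξ ^ 4 - 2 * ξ ^ 5 - 4 * ξ ^ 6
    let X₂ := -9 + 19 * ξ + 76 * ξ ^ 2 - 52 * ξ ^ 3 + 20 * ξ ^ 4 - 4 * ξ ^ 5 - 13 * ξ ^ 6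
    (1 - X₂) * (1 - X₁⁻¹ * X₂) = X₁ ∧ (1 - X₁ ^ 2) ^ 2 = X₁ ^ 2 * X₂ * (1 - X₁⁻¹ * X₂) :=
  stmt_13_general ξ hξ
end

section
/- Define the formal power series W(h) = Σ_{0 ≤ l ≤ k} alpha_{k,l}(e^h) expanded in powers of h, where alpha_{k,l}(q) = (-1)^k q^{-k(k+1)/2 + l(l+1)} (q;q)_{2k+1}/((q;q)_l (q;q)_{k-l}). Then the expansion begins W(h) = -h - (25/2)h^2 - (1621/6)h^3 - (195601/24)h^4 + O(h^5). -/
/-!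
The `h`-adic valuation of `ℚ((h))` is additive, vanishes on `q ^ m = e^{mh}` and equals `1` on
`1 - q ^ c` for `c ≠ 0`. Hence `alpha_{k,l}(e^h)` has valuation `(2k+1) - l - (k-l) = k + 1`, and
only the terms with `k < j` contribute to the coefficient of `h^j`. For `k ≤ 3` the quotient
`(q;q)_{2k+1} / ((q;q)_l (q;q)_{k-l})` is a Gaussian binomial coefficient times
`∏_{i=k+1}^{2k+1} (1 - q^i)`, so `Σ_{k ≤ 3} Σ_{l ≤ k} alpha_{k,l}(q)` is an explicit Laurent
polynomial `Σ c_i q^i`, whose coefficient of `h^j` at `q = e^h` is `Σ c_i i^j / j!`.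
-/

noncomputable section

/-- `q = e^h`, viewed inside the field of formal Laurent series `ℚ((h))`. -/
def qE : LaurentSeries ℚ := HahnSeries.ofPowerSeries ℤ ℚ (PowerSeries.exp ℚ)

/-- `(q;q)_n` at `q = e^h`, i.e. `∏_{j=1}^{n} (1 - e^{jh})`. -/
def pochE (n : ℕ) : LaurentSeries ℚ := ∏ j ∈ Finset.range n, (1 - qE ^ (j + 1))

def alphaE (k l : ℕ) : LaurentSeries ℚ :=
  (-1) ^ k * qE ^ ((l : ℤ) * (l + 1) - (k : ℤ) * (k + 1) / 2) * pochE (2 * k + 1) /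
    (pochE l * pochE (k - l))

open PowerSeries HahnSeries Finset

section HahnSeries

variable {Γ R : Type*}

lemma addVal_eq_of_coeff [AddCancelCommMonoid Γ] [LinearOrder Γ] [IsOrderedCancelAddMonoid Γ]
    [Ring R] [IsDomain R] {x : R⟦Γ⟧} {g : Γ}
    (hg : x.coeff g ≠ 0) (hlt : ∀ i < g, x.coeff i = 0) : addVal Γ R x = g := by
  refine le_antisymm (addVal_le_of_coeff_ne_zero hg) ?_
  rw [addVal_apply, le_orderTop_iff_forall]
  exact fun i hi => hlt i (WithTop.coe_lt_coe.1 hi)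

lemma coeff_ofNat [Zero Γ] [PartialOrder Γ] [DecidableEq Γ] [Zero R] [NatCast R] (n : ℕ)
    [n.AtLeastTwo] (a : Γ) :
    (no_index (OfNat.ofNat n) : R⟦Γ⟧).coeff a = if a = 0 then OfNat.ofNat n else 0 := by
  rw [← Nat.cast_ofNat (R := R⟦Γ⟧), ← single_zero_natCast, coeff_single, Nat.cast_ofNat]
  congr

lemma coeff_ofNat_mul [AddCommMonoid Γ] [PartialOrder Γ] [IsOrderedCancelAddMonoid Γ] [Semiring R]
    (n : ℕ) [n.AtLeastTwo] (x : R⟦Γ⟧) (a : Γ) :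
    ((no_index (OfNat.ofNat n) : R⟦Γ⟧) * x).coeff a = OfNat.ofNat n * x.coeff a := by
  rw [← Nat.cast_ofNat (R := R⟦Γ⟧), ← single_zero_natCast, coeff_single_zero_mul, Nat.cast_ofNat]

end HahnSeries

lemma qE_pow (n : ℕ) : qE ^ n = ofPowerSeries ℤ ℚ (rescale (n : ℚ) (exp ℚ)) := by
  rw [qE, ← map_pow, exp_pow_eq_rescale_exp]

lemma qE_zpow (m : ℤ) : qE ^ m = ofPowerSeries ℤ ℚ (rescale (m : ℚ) (exp ℚ)) := by
  obtain ⟨n, rfl | rfl⟩ := m.eq_nat_or_neg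
  · simpa using qE_pow n
  · rw [zpow_neg, zpow_natCast, qE_pow]
    refine (eq_inv_of_mul_eq_one_left ?_).symm
    rw [← map_mul, exp_mul_exp_eq_exp_add]
    simp

lemma coeff_qE_zpow (m i : ℤ) :
    (qE ^ m).coeff i = if i < 0 then 0 else (m : ℚ) ^ i.natAbs / i.natAbs.factorial := by
  rw [qE_zpow, PowerSeries.coeff_coe]
  split_ifs <;> simp [coeff_rescale, coeff_exp, div_eq_mul_inv]

lemma coeff_qE_pow (n : ℕ) (i : ℤ) :
    (qE ^ n).coeff i = if i < 0 then 0 else (n : ℚ) ^ i.natAbs / i.natAbs.factorial := by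
  rw [← zpow_natCast, coeff_qE_zpow, Int.cast_natCast]

lemma addVal_qE_zpow (m : ℤ) : addVal ℤ ℚ (qE ^ m) = 0 :=
  addVal_eq_of_coeff (g := 0) (by simp [coeff_qE_zpow]) fun i hi => by simp [coeff_qE_zpow, hi]

lemma addVal_one_sub_qE_pow {c : ℕ} (hc : c ≠ 0) : addVal ℤ ℚ (1 - qE ^ c) = 1 := by
  refine addVal_eq_of_coeff (g := 1) ?_ fun i hi => ?_
  · simpa [coeff_qE_pow] using hc
  · obtain hi | rfl : i < 0 ∨ i = 0 := by omega
    · simp [coeff_qE_pow, hi, hi.ne, HahnSeries.coeff_one]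
    · simp [coeff_qE_pow]

lemma qE_ne_zero : qE ≠ 0 := by
  rw [← (addVal ℤ ℚ).ne_top_iff, ← zpow_one qE, addVal_qE_zpow]
  exact WithTop.coe_ne_top

lemma one_sub_qE_pow_ne_zero {c : ℕ} (hc : c ≠ 0) : 1 - qE ^ c ≠ 0 := by
  rw [← (addVal ℤ ℚ).ne_top_iff, addVal_one_sub_qE_pow hc]
  exact WithTop.coe_ne_top

lemma addVal_pochE (n : ℕ) : addVal ℤ ℚ (pochE n) = (n : ℤ) := by
  induction n with
  | zero => simp [pochE]
  | succ n ih =>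
    rw [pochE, prod_range_succ, ← pochE, AddValuation.map_mul, ih,
      addVal_one_sub_qE_pow n.succ_ne_zero]
    norm_cast

lemma addVal_alphaE {k l : ℕ} (hlk : l ≤ k) : addVal ℤ ℚ (alphaE k l) = (k + 1 : ℤ) := by
  simp only [alphaE, AddValuation.map_div, AddValuation.map_mul, AddValuation.map_pow,
    AddValuation.map_neg, AddValuation.map_one, addVal_qE_zpow, addVal_pochE, smul_zero, zero_add]
  rw [← WithTop.coe_add, ← WithTop.LinearOrderedAddCommGroup.coe_sub, WithTop.coe_inj]
  omega

lemma coeff_alphaE_eq_zero {j k l : ℕ} (hlk : l ≤ k) (hjk : j ≤ k) :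
    (alphaE k l).coeff (j : ℤ) = 0 := by
  apply coeff_eq_zero_of_lt_orderTop
  rw [← addVal_apply, addVal_alphaE hlk]
  exact_mod_cast Nat.lt_succ_of_le hjk

lemma sum_alphaE_range_four : ∑ k ∈ range 4, ∑ l ∈ range (k + 1), alphaE k l =
    -qE ^ (-6 : ℤ) - qE ^ (-4 : ℤ) + qE ^ (-1 : ℤ) + 2 + qE ^ 2 + 2 * qE ^ 3 + qE ^ 4 - qE ^ 6
      - qE ^ 7 - qE ^ 8 - 3 * qE ^ 9 - qE ^ 10 - 2 * qE ^ 11 + qE ^ 14 + qE ^ 16 + qE ^ 17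
      + qE ^ 18 + qE ^ 21 - qE ^ 28 := by
  have h0 := qE_ne_zero
  have h1 : 1 - qE ≠ 0 := by simpa using one_sub_qE_pow_ne_zero one_ne_zero
  have h2 := one_sub_qE_pow_ne_zero two_ne_zero
  have h3 := one_sub_qE_pow_ne_zero three_ne_zero
  simp only [sum_range_succ, sum_range_zero, alphaE, pochE, prod_range_succ, prod_range_zero]
  norm_num
  field_simp
  ring

/-- The `h`-expansion of `W(h) = Σ_{0 ≤ l ≤ k} alpha_{k,l}(e^h)` begins
`-h - (25/2)h² - (1621/6)h³ - (195601/24)h⁴ + O(h⁵)`: for each `j ≤ 4`, the summands with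
`k ≥ j` do not contribute to the coefficient of `h^j` (so the `h`-adic sum makes sense), and
the resulting `j`-th coefficient has the stated value. -/
theorem stmt_16 (j : ℕ) (hj : j ≤ 4) :
    (∀ k l : ℕ, l ≤ k → j ≤ k → (alphaE k l).coeff (j : ℤ) = 0) ∧
    (∑ k ∈ Finset.range (j + 1), ∑ l ∈ Finset.range (k + 1), (alphaE k l).coeff (j : ℤ))
      = (if j = 0 then 0 else if j = 1 then -1 else if j = 2 then -25 / 2
          else if j = 3 then -1621 / 6 else -195601 / 24 : ℚ) := by
  refine ⟨fun k l hlk hjk => coeff_alphaE_eq_zero hlk hjk, ?_⟩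
  have hvanish : ∀ k ≥ j, ∑ l ∈ range (k + 1), (alphaE k l).coeff (j : ℤ) = 0 :=
    fun k hjk => sum_eq_zero fun l hl => coeff_alphaE_eq_zero (mem_range_succ_iff.1 hl) hjk
  rw [eventually_constant_sum hvanish j.le_succ, ← eventually_constant_sum hvanish hj]
  simp only [← coeff_sum, sum_alphaE_range_four]
  interval_cases j <;>
    simp only [coeff_add, coeff_sub, coeff_neg, coeff_ofNat_mul, coeff_ofNat, coeff_qE_zpow,
      coeff_qE_pow] <;> norm_num

end
end

section
/- For any integers 0 ≤ l ≤ k and the extended function alpha on Z², the second recursion (1 - q^{l+1}) alpha_{k,l+1}(q) = q^{2l+2} (1 - q^{k-l}) alpha_{k,l}(q) also holds for the companion solution beta, i.e. (1 - q^{l+1}) beta_{k,l+1}(q) = q^{2l+2} (1 - q^{k-l}) beta_{k,l}(q) for all integers k, l (with beta_{k,l} = 0 outside the region l ≤ k ≤ -1). -/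
noncomputable section

/-- The indeterminate `q`, as an element of the rational function field `ℚ(q)`. -/
def q : RatFunc ℚ := RatFunc.X

/-- `(q;q)_n = ∏_{j=1}^{n} (1 - q^j)` for `n ≥ 0`, extended to negative indices by the
functional equation `(q;q)_n = (q;q)_{n+1}/(1 - q^{n+1})` (which, with the field convention
`1/0 = 0`, forces `(q;q)_n = 0` for `n < 0` since `(q;q)_{-1} = (q;q)_0/(1 - q^0) = 1/0`). -/
def qq (n : ℤ) : RatFunc ℚ :=
  if 0 ≤ n then ∏ j ∈ Finset.range n.toNat, (1 - q ^ (j + 1)) else 0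

/-- The companion solution `beta : ℤ² → ℚ(q)`:
`beta_{k,l}(q) = (-1)^{k+l} q^{3k(k+1)/2 + l(l+1)/2 + k + 1} (q;q)_{-l-1}
  / ((q;q)_{-2k-2} (q;q)_{k-l})` when `l ≤ k ≤ -1`, and `0` otherwise. -/
def beta (k l : ℤ) : RatFunc ℚ :=
  if l ≤ k ∧ k ≤ -1 then
    (-1 : RatFunc ℚ) ^ (k + l) * q ^ (3 * k * (k + 1) / 2 + l * (l + 1) / 2 + k + 1) *
      qq (-l - 1) / (qq (-2 * k - 2) * qq (k - l))
  else 0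

/-! Inside the region `l < k ≤ -1`, moving from `l` to `l + 1` flips the sign, multiplies the
power of `q` by `q^(l+1)` (since `(l+1)(l+2)/2 = l(l+1)/2 + l + 1`) and removes one factor each
from `(q;q)_{-l-1}` and `(q;q)_{k-l}`; with `x = q^(l+1)` the recursion then reduces to
`-(1 - x) x = x² (1 - x⁻¹)`. On the diagonal `l = k` the factor `1 - q^(k-l)` vanishes, and
everywhere else both sides vanish because `beta` does. -/

lemma q_ne_zero : q ≠ 0 := RatFunc.X_ne_zero

lemma one_sub_q_pow_ne_zero {n : ℕ} (hn : n ≠ 0) : (1 : RatFunc ℚ) - q ^ n ≠ 0 := by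
  have h : (1 : RatFunc ℚ) - q ^ n =
      -algebraMap (Polynomial ℚ) (RatFunc ℚ) (Polynomial.X ^ n - Polynomial.C 1) := by
    simp [q, RatFunc.algebraMap_X]
  rw [h, neg_ne_zero]
  exact RatFunc.algebraMap_ne_zero (Polynomial.X_pow_sub_C_ne_zero (Nat.pos_of_ne_zero hn) 1)

lemma one_sub_q_zpow_ne_zero {n : ℤ} (hn : n ≠ 0) : (1 : RatFunc ℚ) - q ^ n ≠ 0 := by
  obtain ⟨m, rfl | rfl⟩ := Int.eq_nat_or_neg n
  · rw [zpow_natCast]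
    exact one_sub_q_pow_ne_zero (by omega)
  · have h : (1 : RatFunc ℚ) - q ^ (-(m : ℤ)) = -q ^ (-(m : ℤ)) * (1 - q ^ m) := by
      rw [zpow_neg, zpow_natCast]
      field_simp [pow_ne_zero m q_ne_zero]
      ring
    rw [h]
    exact mul_ne_zero (neg_ne_zero.2 (zpow_ne_zero _ q_ne_zero)) (one_sub_q_pow_ne_zero (by omega))

lemma qq_ne_zero {n : ℤ} (hn : 0 ≤ n) : qq n ≠ 0 := by
  rw [qq, if_pos hn]
  exact Finset.prod_ne_zero_iff.2 fun j _ => one_sub_q_pow_ne_zero j.succ_ne_zero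

lemma qq_add_one {n : ℤ} (hn : 0 ≤ n) : qq (n + 1) = qq n * (1 - q ^ (n + 1)) := by
  rw [qq, qq, if_pos (by omega), if_pos hn, show (n + 1).toNat = n.toNat + 1 by omega,
    Finset.prod_range_succ, ← zpow_natCast]
  push_cast
  rw [Int.toNat_of_nonneg hn]

lemma Int.add_one_mul_add_two_div_two (l : ℤ) :
    (l + 1) * (l + 1 + 1) / 2 = l * (l + 1) / 2 + (l + 1) := by
  have h : l * (l + 1) % 2 = 0 := Int.even_iff.1 (Int.even_mul_succ_self l)
  have : (l + 1) * (l + 1 + 1) = l * (l + 1) + 2 * (l + 1) := by ring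
  omega

theorem beta_recursion_of_lt {k l : ℤ} (hlk : l < k) (hk : k ≤ -1) :
    (1 - q ^ (l + 1)) * beta k (l + 1) = q ^ (2 * l + 2) * (1 - q ^ (k - l)) * beta k l := by
  have hsign : (-1 : RatFunc ℚ) ^ (k + (l + 1)) = -(-1) ^ (k + l) := by
    rw [← add_assoc, zpow_add_one₀ (by norm_num), mul_neg_one]
  have hpow : q ^ (3 * k * (k + 1) / 2 + (l + 1) * (l + 1 + 1) / 2 + k + 1) =
      q ^ (3 * k * (k + 1) / 2 + l * (l + 1) / 2 + k + 1) * q ^ (l + 1) := by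
    rw [← zpow_add₀ q_ne_zero, Int.add_one_mul_add_two_div_two]
    ring_nf
  have hnum : qq (-l - 1) = qq (-(l + 1) - 1) * (1 - q ^ (-(l + 1))) := by
    rw [show -l - 1 = -(l + 1) - 1 + 1 by ring, qq_add_one (by omega), sub_add_cancel]
  have hden : qq (k - l) = qq (k - (l + 1)) * (1 - q ^ (k - l)) := by
    rw [show k - l = k - (l + 1) + 1 by ring, qq_add_one (by omega)]
  have hsq : q ^ (2 * l + 2) = q ^ (l + 1) * q ^ (l + 1) := by
    rw [← zpow_add₀ q_ne_zero]
    ring_nf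
  have hA := qq_ne_zero (n := -2 * k - 2) (by omega)
  have hB := qq_ne_zero (n := k - (l + 1)) (by omega)
  have hC := one_sub_q_zpow_ne_zero (n := k - l) (by omega)
  have hx := zpow_ne_zero (l + 1) q_ne_zero
  rw [beta, beta, if_pos ⟨hlk, hk⟩, if_pos ⟨hlk.le, hk⟩, hsign, hpow, hnum, hden, hsq,
    zpow_neg]
  generalize q ^ (l + 1) = x at *
  field_simp
  ring

/-- The recursion `(1 - q^{l+1}) beta_{k,l+1}(q) = q^{2l+2} (1 - q^{k-l}) beta_{k,l}(q)`
holds for all integers `k, l` (with `beta = 0` outside the region `l ≤ k ≤ -1`). -/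
theorem stmt_19 (k l : ℤ) :
    (1 - q ^ (l + 1)) * beta k (l + 1) = q ^ (2 * l + 2) * (1 - q ^ (k - l)) * beta k l := by
  rcases lt_trichotomy l k with hlk | rfl | hkl
  · by_cases hk : k ≤ -1
    · exact beta_recursion_of_lt hlk hk
    · simp only [beta, if_neg (fun h : _ ∧ _ => hk h.2), mul_zero]
  · simp [beta]
  · rw [beta, beta, if_neg (by omega), if_neg (by omega), mul_zero, mul_zero]

end
end
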